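/- Let Γ = ℤ and define f : Q₂ → ℤ by f((x_n)_n) = Σ_n x_n, identifying Q₂ with finitely supported 0-1 sequences. Then for every v ∈ V, the map x ↦ f(x) − f(v^{-1}x) is locally constant, and hence f normalizes G = Lℤ ⋊ V inside (∏_{Q₂}ℤ) ⋊ V while f itself takes infinitely many values. -/

import Mathlib

/-! Basic setup: the Cantor space, prefix replacement, Thompson's group `V`,
slopes, dyadic rationals, standard dyadic partitions, locally constant maps,
and the permutation model of the twisted fraction groups `LΓ ⋊ V`. -/

abbrev Cantor : Type := ℕ → Bool

/-- Concatenation of a finite word with an infinite sequence. -/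
def cat (w : List Bool) (x : Cantor) : Cantor :=
  fun n => if n < w.length then w.getD n false else x (n - w.length)

/-- The standard dyadic interval (cylinder) associated to a finite word. -/
def cyl (w : List Bool) : Set Cantor := {x | ∃ y : Cantor, x = cat w y}

/-- Membership in Thompson's group `V`: a homeomorphism of the Cantor space which is
everywhere locally given by prefix replacement. -/
def memV (v : Cantor ≃ₜ Cantor) : Prop :=
  ∀ x : Cantor, ∃ (m w : List Bool) (y : Cantor),
    x = cat m y ∧ ∀ z : Cantor, v (cat m z) = cat w z

/-- `HasLogSlope v x k` : `k = log₂ v'(x)`, base-2 logarithm of the slope of `v` at `x`. -/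
def HasLogSlope (v : Cantor ≃ₜ Cantor) (x : Cantor) (k : ℤ) : Prop :=
  ∃ (m w : List Bool) (y : Cantor),
    x = cat m y ∧ (∀ z : Cantor, v (cat m z) = cat w z) ∧
      k = (m.length : ℤ) - (w.length : ℤ)

open Classical in
noncomputable def logSlope (v : Cantor ≃ₜ Cantor) (x : Cantor) : ℤ :=
  if h : ∃ k : ℤ, HasLogSlope v x k then h.choose else 0

/-- The eventually periodic sequence `c∞ = c·c·c⋯`. -/
def tailSeq (c : List Bool) : Cantor := fun n => c.getD (n % c.length) false

/-- `x` lies in the tail equivalence class of the word `c`, i.e. `x = y·c∞`. -/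
def InTailClass (x : Cantor) (c : List Bool) : Prop :=
  ∃ y : List Bool, x = cat y (tailSeq c)

/-- `x` is eventually periodic (a rational point of the Cantor space). -/
def EvPeriodic (x : Cantor) : Prop :=
  ∃ (y c : List Bool), c ≠ [] ∧ x = cat y (tailSeq c)

/-- A prime word: a nonempty word which is not a proper power of a word. -/
def PrimeWord (c : List Bool) : Prop :=
  c ≠ [] ∧ ∀ (d : List Bool) (k : ℕ), 2 ≤ k → c ≠ (List.replicate k d).flatten

/-- `conjH φ v = φ ∘ v ∘ φ⁻¹`. -/
def conjH (φ v : Cantor ≃ₜ Cantor) : Cantor ≃ₜ Cantor := φ.symm.trans (v.trans φ)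

/-- `φ` normalizes Thompson's group `V` inside `Homeo(𝔠)` : `φ V φ⁻¹ = V`. -/
def NormalizesV (φ : Cantor ≃ₜ Cantor) : Prop :=
  (conjH φ) '' {v | memV v} = {v | memV v}

/-- The copy of the dyadic rationals `Q₂ ⊂ 𝔠` : finitely supported sequences. -/
def InQ2 (x : Cantor) : Prop := ∃ n : ℕ, ∀ m, n ≤ m → x m = false

def zeroSeq : Cantor := fun _ => false

/-- A standard dyadic partition of the Cantor space. -/
def IsSDP (P : Finset (List Bool)) : Prop :=
  ∀ x : Cantor, ∃! w : List Bool, w ∈ P ∧ x ∈ cyl w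

/-- Locally constant map: constant on each piece of some standard dyadic partition. -/
def IsLC {Γ : Type*} (f : Cantor → Γ) : Prop :=
  ∃ P : Finset (List Bool), IsSDP P ∧ ∀ w ∈ P, ∀ y z : Cantor, f (cat w y) = f (cat w z)

/-- `h` agrees on `Q₂` with (the restriction of) a locally constant map. -/
def AgreesOnQ2WithLC {Γ : Type*} (h : Cantor → Γ) : Prop :=
  ∃ b : Cantor → Γ, IsLC b ∧ ∀ x, InQ2 x → h x = b x

section GroupPart
variable {Γ : Type*} [Group Γ]

/-- `alphaWord α₀ α₁ (m₁⋯m_k) = α_{m_k} ∘ ⋯ ∘ α_{m₁}`. -/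
def alphaWord (α₀ α₁ : Γ ≃* Γ) (m : List Bool) : Γ ≃* Γ :=
  m.foldl (fun acc b => acc.trans (if b then α₁ else α₀)) (MulEquiv.refl Γ)

open Classical in
/-- The twisting automorphism `τ_{v,x} = α_{v(I)}⁻¹ ∘ α_I` for a standard dyadic
interval `I` containing `x` and adapted to `v`. -/
noncomputable def tauEquiv (α₀ α₁ : Γ ≃* Γ) (v : Cantor ≃ₜ Cantor) (x : Cantor) : Γ ≃* Γ :=
  if h : ∃ p : List Bool × List Bool, x ∈ cyl p.1 ∧ ∀ z : Cantor, v (cat p.1 z) = cat p.2 z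
  then (alphaWord α₀ α₁ h.choose.1).trans (alphaWord α₀ α₁ h.choose.2).symm
  else MulEquiv.refl Γ

/-- The element `a·v` of the twisted `LΓ ⋊ V`, realized as the permutation
`(x,g) ↦ (v x, a(v x) · τ_{v,x}(g))` of `𝔠 × Γ`. -/
noncomputable def permOf (α₀ α₁ : Γ ≃* Γ) (a : Cantor → Γ) (v : Cantor ≃ₜ Cantor) :
    Equiv.Perm (Cantor × Γ) where
  toFun p := (v p.1, a (v p.1) * tauEquiv α₀ α₁ v p.1 p.2)
  invFun p := (v.symm p.1, (tauEquiv α₀ α₁ v (v.symm p.1)).symm ((a p.1)⁻¹ * p.2))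
  left_inv := by rintro ⟨x, g⟩; simp
  right_inv := by rintro ⟨x, g⟩; simp

end GroupPart

/-- The twisted fraction group `G = LΓ ⋊ V` of the triple `(Γ, α₀, α₁)`,
as a group of permutations of `𝔠 × Γ`. -/
noncomputable def Gsub (Γ : Type*) [Group Γ] (α₀ α₁ : Γ ≃* Γ) :
    Subgroup (Equiv.Perm (Cantor × Γ)) :=
  Subgroup.closure {p | ∃ a v, IsLC a ∧ memV v ∧ p = permOf α₀ α₁ a v}

/-- The untwisted case `α₀ = α₁ = id`. -/
noncomputable def permOfU {Γ : Type*} [Group Γ] (a : Cantor → Γ) (v : Cantor ≃ₜ Cantor) :=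
  permOf (MulEquiv.refl Γ) (MulEquiv.refl Γ) a v

/-- The untwisted fraction group `G = LΓ ⋊ V`. -/
noncomputable def GsubU (Γ : Type*) [Group Γ] := Gsub Γ (MulEquiv.refl Γ) (MulEquiv.refl Γ)

/-- `f ∈ N_{K̄}(G)` : the element `f` of `K̄ = ∏_{Q₂}Γ` normalizes `G = LΓ ⋊ V`
(untwisted case), i.e. `f·a·(f^v)⁻¹` and `f⁻¹·a·f^v` are locally constant on `Q₂`. -/
def InNormKbar {Γ : Type*} [Group Γ] (f : Cantor → Γ) : Prop :=
  ∀ (a : Cantor → Γ) (v : Cantor ≃ₜ Cantor), IsLC a → memV v →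
    AgreesOnQ2WithLC (fun x => f x * a x * (f (v.symm x))⁻¹) ∧
    AgreesOnQ2WithLC (fun x => (f x)⁻¹ * a x * f (v.symm x))

open Classical in
/-- The map `f : Q₂ → ℤ`, `(x_n)_n ↦ Σ_n x_n`, on finitely supported sequences. -/
noncomputable def fSum : Cantor → ℤ := fun x =>
  if h : ∃ n : ℕ, ∀ m, n ≤ m → x m = false
  then ∑ i ∈ Finset.range h.choose, (if x i then 1 else 0)
  else 0

/-! Prepending a word adds its number of ones to the digit sum: `f(w·y) = |w|₁ + f(y)`.
On a cylinder `u·𝔠` on which `v⁻¹` acts by a prefix replacement `u·y ↦ m·y`, the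
difference `f(x) − f(v⁻¹x)` is therefore the constant `|u|₁ − |m|₁`. By compactness of
the Cantor space one depth `N` serves all points, so the difference is constant on the
partition into the cylinders of the words of length `N`. The points `1ⁿ0∞` show that `f`
takes every value in `ℕ`. -/

lemma cat_apply_of_lt {w : List Bool} {x : Cantor} {n : ℕ} (h : n < w.length) :
    cat w x n = w.getD n false := if_pos h

lemma cat_apply_of_le {w : List Bool} {x : Cantor} {n : ℕ} (h : w.length ≤ n) :
    cat w x n = x (n - w.length) := if_neg (by omega)

@[simp] lemma cat_nil (x : Cantor) : cat [] x = x := rfl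

lemma cat_cat (w r : List Bool) (z : Cantor) : cat w (cat r z) = cat (w ++ r) z := by
  funext n
  rcases lt_or_ge n w.length with h | h
  · rw [cat_apply_of_lt h, cat_apply_of_lt (by simp only [List.length_append]; omega),
      List.getD_append _ _ _ _ h]
  · rcases lt_or_ge n (w.length + r.length) with h2 | h2
    · rw [cat_apply_of_le h, cat_apply_of_lt (by omega),
        cat_apply_of_lt (by simp only [List.length_append]; omega),
        List.getD_append_right _ _ _ _ h]
    · rw [cat_apply_of_le h, cat_apply_of_le (by omega),
        cat_apply_of_le (by simp only [List.length_append]; omega)]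
      congr 1
      simp only [List.length_append]
      omega

lemma mem_cyl_iff {x : Cantor} {w : List Bool} :
    x ∈ cyl w ↔ ∀ i, i < w.length → x i = w.getD i false := by
  constructor
  · rintro ⟨y, rfl⟩ i hi
    exact cat_apply_of_lt hi
  · intro h
    refine ⟨fun n => x (n + w.length), funext fun n => ?_⟩
    rcases lt_or_ge n w.length with hn | hn
    · rw [cat_apply_of_lt hn, h n hn]
    · rw [cat_apply_of_le hn, Nat.sub_add_cancel hn]

lemma isOpen_cyl (w : List Bool) : IsOpen (cyl w) := by
  have hcyl : cyl w =
      ⋂ i ∈ Finset.range w.length, (fun x : Cantor => x i) ⁻¹' {w.getD i false} := by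
    ext x
    simp [mem_cyl_iff]
  rw [hcyl]
  exact isOpen_biInter_finset fun i _ =>
    (continuous_apply i).isOpen_preimage _ (isOpen_discrete _)

lemma eq_append_of_mem_cyl {u w : List Bool} {x : Cantor} (hw : x ∈ cyl w) (hu : x ∈ cyl u)
    (h : w.length ≤ u.length) : ∃ r, u = w ++ r := by
  refine ⟨u.drop w.length, ?_⟩
  nth_rewrite 1 [← List.take_append_drop w.length u]
  congr 1
  refine List.ext_getElem (by simp; omega) fun i _ hi => ?_
  have hwi := mem_cyl_iff.1 hw i hi
  have hui := mem_cyl_iff.1 hu i (by omega)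
  rw [List.getD_eq_getElem _ _ hi] at hwi
  rw [List.getD_eq_getElem _ _ (by omega)] at hui
  rw [List.getElem_take, ← hui, hwi]

lemma exists_depth_of_forall_mem_cyl {P : List Bool → Prop} (hP : ∀ w r, P w → P (w ++ r))
    (hcover : ∀ x, ∃ w, x ∈ cyl w ∧ P w) :
    ∃ N, ∀ u : List Bool, N ≤ u.length → P u := by
  choose w hw hPw using hcover
  obtain ⟨t, ht⟩ := isCompact_univ.elim_finite_subcover (fun x => cyl (w x))
    (fun x => isOpen_cyl _) (fun x _ => Set.mem_iUnion.2 ⟨x, hw x⟩)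
  refine ⟨t.sup fun x => (w x).length, fun u hu => ?_⟩
  obtain ⟨p, hpt, hp⟩ := Set.mem_iUnion₂.1 (ht (Set.mem_univ (cat u zeroSeq)))
  obtain ⟨r, rfl⟩ := eq_append_of_mem_cyl hp ⟨zeroSeq, rfl⟩
    ((Finset.le_sup (f := fun x => (w x).length) hpt).trans hu)
  exact hP _ _ (hPw p)

lemma IsLC.exists_depth {Γ : Type*} {f : Cantor → Γ} (hf : IsLC f) :
    ∃ N, ∀ u : List Bool, N ≤ u.length → ∀ y z, f (cat u y) = f (cat u z) := by
  obtain ⟨P, hP, hconst⟩ := hf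
  refine exists_depth_of_forall_mem_cyl (fun w r hw y z => ?_) fun x => ?_
  · rw [← cat_cat, ← cat_cat]
    exact hw _ _
  · obtain ⟨w, ⟨hwP, hx⟩, -⟩ := hP x
    exact ⟨w, hx, hconst w hwP⟩

lemma memV.exists_mem_cyl_symm {v : Cantor ≃ₜ Cantor} (hv : memV v) (x : Cantor) :
    ∃ w, x ∈ cyl w ∧ ∃ m, ∀ z, v.symm (cat w z) = cat m z := by
  obtain ⟨m, w, y, hy, hvm⟩ := hv (v.symm x)
  refine ⟨w, ⟨y, ?_⟩, m, fun z => ?_⟩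
  · rw [← hvm, ← hy, v.apply_symm_apply]
  · rw [← hvm, v.symm_apply_apply]

lemma memV.exists_depth_symm {v : Cantor ≃ₜ Cantor} (hv : memV v) :
    ∃ N, ∀ u : List Bool, N ≤ u.length → ∃ m, ∀ z, v.symm (cat u z) = cat m z :=
  exists_depth_of_forall_mem_cyl
    (fun _ r ⟨m, hm⟩ => ⟨m ++ r, fun z => by rw [← cat_cat, hm, cat_cat]⟩)
    hv.exists_mem_cyl_symm

def prefixWord (x : Cantor) (N : ℕ) : List Bool := List.ofFn fun i : Fin N => x i

@[simp] lemma length_prefixWord (x : Cantor) (N : ℕ) : (prefixWord x N).length = N :=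
  List.length_ofFn

lemma cat_prefixWord (x : Cantor) (N : ℕ) :
    cat (prefixWord x N) (fun n => x (n + N)) = x := by
  funext n
  rcases lt_or_ge n N with h | h
  · rw [cat_apply_of_lt (by simpa using h), List.getD_eq_getElem _ _ (by simpa using h)]
    simp [prefixWord]
  · rw [cat_apply_of_le (by simpa using h), length_prefixWord, Nat.sub_add_cancel h]

lemma prefixWord_cat (u : List Bool) (y : Cantor) : prefixWord (cat u y) u.length = u := by
  refine List.ext_getElem (by simp) fun i _ hi => ?_
  simp only [prefixWord, List.getElem_ofFn]
  rw [cat_apply_of_lt hi, List.getD_eq_getElem _ _ hi]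

noncomputable def wordsOfLength (N : ℕ) : Finset (List Bool) :=
  Finset.univ.image fun f : Fin N → Bool => List.ofFn f

lemma mem_wordsOfLength {w : List Bool} {N : ℕ} : w ∈ wordsOfLength N ↔ w.length = N := by
  simp only [wordsOfLength, Finset.mem_image, Finset.mem_univ, true_and]
  constructor
  · rintro ⟨f, rfl⟩
    exact List.length_ofFn
  · rintro rfl
    exact ⟨fun i => w[i], List.ofFn_getElem⟩

lemma isSDP_wordsOfLength (N : ℕ) : IsSDP (wordsOfLength N) := by
  intro x
  refine ⟨prefixWord x N, ⟨mem_wordsOfLength.2 (length_prefixWord x N),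
    _, (cat_prefixWord x N).symm⟩, ?_⟩
  rintro w ⟨hw, y, rfl⟩
  rw [← mem_wordsOfLength.1 hw, prefixWord_cat]

lemma isLC_const {Γ : Type*} (c : Γ) : IsLC fun _ : Cantor => c :=
  ⟨wordsOfLength 0, isSDP_wordsOfLength 0, fun _ _ _ _ => rfl⟩

lemma inQ2_zeroSeq : InQ2 zeroSeq := ⟨0, fun _ _ => rfl⟩

lemma InQ2.cat {z : Cantor} (hz : InQ2 z) (w : List Bool) : InQ2 (cat w z) := by
  obtain ⟨n, hn⟩ := hz
  exact ⟨w.length + n, fun m hm => by rw [cat_apply_of_le (by omega)]; exact hn _ (by omega)⟩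

lemma InQ2.shift {x : Cantor} (hx : InQ2 x) (N : ℕ) : InQ2 fun n => x (n + N) := by
  obtain ⟨n, hn⟩ := hx
  exact ⟨n, fun m hm => hn _ (by omega)⟩

lemma agreesOnQ2WithLC_of_depth {Γ : Type*} {h : Cantor → Γ} {N : ℕ}
    (hN : ∀ u : List Bool, u.length = N →
      ∀ y z, InQ2 y → InQ2 z → h (cat u y) = h (cat u z)) :
    AgreesOnQ2WithLC h := by
  refine ⟨fun x => h (cat (prefixWord x N) zeroSeq),
    ⟨wordsOfLength N, isSDP_wordsOfLength N, fun w hw y z => ?_⟩, fun x hx => ?_⟩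
  · simp only [← mem_wordsOfLength.1 hw, prefixWord_cat]
  · conv_lhs => rw [← cat_prefixWord x N]
    exact hN _ (length_prefixWord x N) _ _ (hx.shift N) inQ2_zeroSeq

lemma fSum_eq_sum {x : Cantor} {N : ℕ} (h : ∀ m, N ≤ m → x m = false) :
    fSum x = ∑ i ∈ Finset.range N, if x i then 1 else 0 := by
  have hx : ∃ n : ℕ, ∀ m, n ≤ m → x m = false := ⟨N, h⟩
  have sum_eq : ∀ K M, K ≤ M → (∀ m, K ≤ m → x m = false) →
      ∑ i ∈ Finset.range K, (if x i then 1 else 0) =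
        ∑ i ∈ Finset.range M, (if x i then (1 : ℤ) else 0) :=
    fun K M hKM hK => Finset.sum_subset (Finset.range_subset_range.2 hKM) fun i _ hi => by
      rw [hK i (by simpa using hi), if_neg Bool.false_ne_true]
  rw [fSum, dif_pos hx, sum_eq _ _ (le_max_left _ N) hx.choose_spec,
    sum_eq _ _ (le_max_right _ N) h]

lemma fSum_zeroSeq : fSum zeroSeq = 0 := by
  simp [fSum_eq_sum (x := zeroSeq) (N := 0) fun _ _ => rfl]

lemma fSum_cat_singleton (b : Bool) {x : Cantor} (hx : InQ2 x) :
    fSum (cat [b] x) = (if b then 1 else 0) + fSum x := by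
  obtain ⟨n, hn⟩ := hx
  have hsupp : ∀ m, n + 1 ≤ m → cat [b] x m = false := fun m hm => by
    rw [cat_apply_of_le (by simp; omega)]
    exact hn _ (by simp; omega)
  rw [fSum_eq_sum hsupp, fSum_eq_sum hn, Finset.sum_range_succ', add_comm]
  simp [cat_apply_of_le, cat_apply_of_lt]

lemma fSum_cat (w : List Bool) {z : Cantor} (hz : InQ2 z) :
    fSum (cat w z) = w.count true + fSum z := by
  induction w with
  | nil => simp
  | cons b w ih =>
    rw [← List.singleton_append, ← cat_cat, fSum_cat_singleton b (hz.cat w), ih,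
      List.count_append]
    cases b <;> simp only [List.count_singleton, beq_iff_eq] <;> push_cast <;> ring

lemma fSum_replicate_true (n : ℕ) : fSum (cat (List.replicate n true) zeroSeq) = n := by
  simp [fSum_cat _ inQ2_zeroSeq, fSum_zeroSeq]

lemma agreesOnQ2WithLC_fSum_add_sub {a : Cantor → ℤ} {v : Cantor ≃ₜ Cantor} (ha : IsLC a)
    (hv : memV v) : AgreesOnQ2WithLC fun x => fSum x + a x - fSum (v.symm x) := by
  obtain ⟨Na, hNa⟩ := ha.exists_depth
  obtain ⟨Nv, hNv⟩ := hv.exists_depth_symm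
  refine agreesOnQ2WithLC_of_depth (N := max Na Nv) fun u hu y z hy hz => ?_
  obtain ⟨m, hm⟩ := hNv u (hu ▸ le_max_right _ _)
  rw [hm, hm, fSum_cat _ hy, fSum_cat _ hy, fSum_cat _ hz, fSum_cat _ hz,
    hNa u (hu ▸ le_max_left _ _) y z]
  ring

/-- For `Γ = ℤ` and `f((x_n)_n) = Σ_n x_n` on `Q₂`, the map
`x ↦ f(x) − f(v⁻¹x)` is locally constant for every `v ∈ V`; hence `f` normalizes
`G = Lℤ ⋊ V` inside `(∏_{Q₂}ℤ) ⋊ V`, while `f` itself takes infinitely many values. -/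
theorem sum_of_digits_normalizes :
    (∀ v : Cantor ≃ₜ Cantor, memV v →
      AgreesOnQ2WithLC (fun x => fSum x - fSum (v.symm x))) ∧
    (∀ (a : Cantor → ℤ) (v : Cantor ≃ₜ Cantor), IsLC a → memV v →
      AgreesOnQ2WithLC (fun x => fSum x + a x - fSum (v.symm x))) ∧
    Set.Infinite (fSum '' {x | InQ2 x}) := by
  refine ⟨fun v hv => ?_, fun a v ha hv => agreesOnQ2WithLC_fSum_add_sub ha hv, ?_⟩
  · simpa using agreesOnQ2WithLC_fSum_add_sub (isLC_const 0) hv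
  · refine Set.infinite_of_injective_forall_mem Nat.cast_injective fun n : ℕ => ?_
    exact ⟨_, inQ2_zeroSeq.cat (List.replicate n true), fSum_replicate_true n⟩
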